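/- Assume additionally λ ≥ 0. Then for every real d×d matrix A one has the coercivity bound ‖A‖_F² ≤ (dλ + 2μ) ⟨𝒜A, A⟩_F. (This is the pointwise inequality behind the λ-dependent stress bound ‖e_h^σ‖ ≤ C √(λ_max + μ_max) ⦀(e_h^σ, e_h^u, e_h^û, e_h^ũ)⦀ established in the proof of Lemma 3.6.) -/
import Mathlib

open Matrix

/-- The compliance tensor: `𝒜A = (1/(2μ))(A − (λ/(2μ + dλ)) tr(A) I)`. -/
noncomputable def compliance (d : ℕ) (μ lam : ℝ) (A : Matrix (Fin d) (Fin d) ℝ) :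
    Matrix (Fin d) (Fin d) ℝ :=
  (1 / (2 * μ)) • (A - (lam / (2 * μ + (d : ℝ) * lam)) • (A.trace • (1 : Matrix (Fin d) (Fin d) ℝ)))

/-- The Frobenius inner product `⟨A, B⟩_F = tr(Aᵀ B)`. -/
noncomputable def frob (d : ℕ) (A B : Matrix (Fin d) (Fin d) ℝ) : ℝ :=
  (Aᵀ * B).trace

/-- The deviatoric part `A_* = A − (1/d) tr(A) I`. -/
noncomputable def dev (d : ℕ) (A : Matrix (Fin d) (Fin d) ℝ) :
    Matrix (Fin d) (Fin d) ℝ :=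
  A - ((1 : ℝ) / (d : ℝ)) • (A.trace • (1 : Matrix (Fin d) (Fin d) ℝ))

lemma frob_eq_sum (d : ℕ) (A : Matrix (Fin d) (Fin d) ℝ) :
    frob d A A = ∑ i, ∑ j, A j i * A j i := by
  unfold frob
  rw [Matrix.trace]
  simp [Matrix.mul_apply, Matrix.diag]

lemma frob_nonneg (d : ℕ) (A : Matrix (Fin d) (Fin d) ℝ) : 0 ≤ frob d A A := by
  rw [frob_eq_sum]
  exact Finset.sum_nonneg fun i _ => Finset.sum_nonneg fun j _ => mul_self_nonneg _

lemma trace_sq_le (d : ℕ) (A : Matrix (Fin d) (Fin d) ℝ) :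
    A.trace ^ 2 ≤ (d : ℝ) * frob d A A := by
  have h1 : A.trace ^ 2 ≤ (d : ℝ) * ∑ i, A i i ^ 2 := by
    have := sq_sum_le_card_mul_sum_sq (s := (Finset.univ : Finset (Fin d)))
      (f := fun i => A i i)
    simpa [Matrix.trace, Matrix.diag] using this
  refine h1.trans (mul_le_mul_of_nonneg_left ?_ (by positivity))
  rw [frob_eq_sum]
  apply Finset.sum_le_sum
  intro i _
  calc A i i ^ 2 = A i i * A i i := by ring
    _ ≤ ∑ j, A j i * A j i := Finset.single_le_sum (f := fun j => A j i * A j i)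
        (fun j _ => mul_self_nonneg _) (Finset.mem_univ i)

/-- Coercivity of the compliance tensor for nonnegative Lamé coefficient. -/
theorem compliance_coercivity (d : ℕ) (hd : 1 ≤ d) (μ lam : ℝ) (hμ : 0 < μ) (hlam0 : 0 ≤ lam)
    (hlam : 2 * μ + (d : ℝ) * lam ≠ 0) (A : Matrix (Fin d) (Fin d) ℝ) :
    frob d A A ≤ ((d : ℝ) * lam + 2 * μ) * frob d (compliance d μ lam A) A := by
  have key : frob d (compliance d μ lam A) A
      = (1 / (2 * μ)) * (frob d A A - (lam / (2 * μ + (d : ℝ) * lam)) * (A.trace * A.trace)) := by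
    unfold compliance frob
    simp [Matrix.sub_mul, Matrix.smul_mul, Matrix.transpose_smul, Matrix.transpose_sub,
      Matrix.transpose_one, Matrix.one_mul, Matrix.trace_sub, Matrix.trace_smul, smul_eq_mul]
  rw [key, ← sub_nonneg]
  have ht := trace_sq_le d A
  have hf := frob_nonneg d A
  have hpos : 0 < 2 * μ + (d : ℝ) * lam := by positivity
  have heq : ((d : ℝ) * lam + 2 * μ) * (1 / (2 * μ) * (frob d A A - lam / (2 * μ + (d : ℝ) * lam) * (A.trace * A.trace))) - frob d A A
      = (lam * ((d : ℝ) * frob d A A - A.trace ^ 2)) / (2 * μ) := by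
    field_simp
    ring
  rw [heq]
  apply div_nonneg
  · exact mul_nonneg hlam0 (by linarith)
  · positivity
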